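/- arXiv:1506.01986 — 6 statements merged into one kernel-verified Lean document; each statement's English description precedes it below -/
import Mathlib

section
/- If there exists a proper class of almost strongly compact cardinals, then for every cardinal μ there exists an L_{μ,ω}-compact cardinal; conversely, if for every cardinal μ there exists an L_{μ,ω}-compact cardinal, then there exists a proper class of almost strongly compact cardinals. -/
universe u

open Cardinal Filter

/-- A cardinal `κ ≥ μ` is `L_{μ,ω}`-compact if every `κ`-complete proper filter on any set `I`
extends to a `μ`-complete ultrafilter on `I`. -/
def IsLMuOmegaCompact (μ κ : Cardinal.{u}) : Prop :=
  μ ≤ κ ∧ ∀ (I : Type u) (F : Filter I), F.NeBot → CardinalInterFilter F κ →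
    ∃ U : Ultrafilter I, F ≤ (U : Filter I) ∧ CardinalInterFilter (U : Filter I) μ

/-- A cardinal `κ` is almost strongly compact if it is `L_{μ,ω}`-compact for every `μ < κ`. -/
def AlmostStronglyCompact (κ : Cardinal.{u}) : Prop :=
  ∀ μ < κ, IsLMuOmegaCompact μ κ

theorem IsLMuOmegaCompact.mono {μ κ κ' : Cardinal.{u}} (h : IsLMuOmegaCompact μ κ)
    (hκ : κ ≤ κ') : IsLMuOmegaCompact μ κ' :=
  ⟨h.1.trans hκ, fun I F hF _hc =>
    h.2 I F hF (CardinalInterFilter.of_cardinalInterFilter_of_le (c := κ') F hκ)⟩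

/-- There is a proper class of almost strongly compact cardinals if and only if for every
cardinal `μ` there exists an `L_{μ,ω}`-compact cardinal. -/
theorem properClass_almostStronglyCompact_iff_forall_exists_lMuOmegaCompact :
    (∀ θ : Cardinal.{u}, ∃ κ : Cardinal.{u}, θ < κ ∧ AlmostStronglyCompact κ) ↔
      (∀ μ : Cardinal.{u}, ∃ κ : Cardinal.{u}, IsLMuOmegaCompact μ κ) := by
  constructor
  · intro h μ
    obtain ⟨κ, hμκ, hκ⟩ := h μ
    exact ⟨κ, hκ μ hμκ⟩
  · intro h θ
    choose f hf using h
    let g : ℕ → Cardinal.{u} := fun n => Nat.rec (motive := fun _ => Cardinal.{u}) θ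
      (fun _ α => max (Order.succ α) (⨆ μ : Set.Iio α, f μ)) n
    have hg : ∀ n, g n < g (n + 1) := fun n =>
      lt_of_lt_of_le (Order.lt_succ _) (le_max_left _ _)
    have hgmono : ∀ n, g n ≤ g (n + 1) := fun n => (hg n).le
    set κ := ⨆ n, g n with hκdef
    have hbdd : BddAbove (Set.range g) := Cardinal.bddAbove_range g
    have hle : ∀ n, g n ≤ κ := fun n => le_ciSup hbdd n
    refine ⟨κ, lt_of_lt_of_le (hg 0) (hle 1), ?_⟩
    intro μ hμ
    obtain ⟨n, hn⟩ := exists_lt_of_lt_ciSup hμ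
    have hfμ : f μ ≤ g (n + 1) := by
      have h1 : f μ ≤ ⨆ ν : Set.Iio (g n), f ↑ν :=
        le_ciSup (Cardinal.bddAbove_range (fun ν : Set.Iio (g n) => f ↑ν))
          (⟨μ, hn⟩ : Set.Iio (g n))
      exact h1.trans (le_max_right (Order.succ (g n)) _)
    exact (hf μ).mono (hfμ.trans (hle (n + 1)))
end

section
/- The relation ◁ (sharply less than) on regular cardinals is transitive: if κ ◁ κ' and κ' ◁ κ'', then κ ◁ κ''. -/
universe u

open Cardinal

/-- `κ` is sharply less than `κ'` (`κ ◁ κ'`): `κ < κ'` and for every set `A` of cardinality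
less than `κ'`, the poset `[A]^{<κ}` of subsets of `A` of cardinality less than `κ`, ordered
by inclusion, has a cofinal subset of cardinality less than `κ'`. -/
def SharplyLess (κ κ' : Cardinal.{u}) : Prop :=
  κ < κ' ∧ ∀ (A : Type u), #A < κ' →
    ∃ T : Set {s : Set A // #s < κ}, #T < κ' ∧
      ∀ s : {s : Set A // #s < κ}, ∃ t ∈ T, s.1 ⊆ t.1

/-- The sharply-less-than relation on regular cardinals is transitive. -/
theorem SharplyLess.trans {κ κ' κ'' : Cardinal.{u}}
    (hκ : κ.IsRegular) (hκ' : κ'.IsRegular) (hκ'' : κ''.IsRegular)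
    (h₁ : SharplyLess κ κ') (h₂ : SharplyLess κ' κ'') : SharplyLess κ κ'' := by
  obtain ⟨hlt₁, H₁⟩ := h₁
  obtain ⟨hlt₂, H₂⟩ := h₂
  refine ⟨hlt₁.trans hlt₂, fun A hA => ?_⟩
  obtain ⟨T', hT', hcof'⟩ := H₂ A hA
  -- for each t ∈ T', get a cofinal family in [t]^{<κ}
  have hmem : ∀ t : T', #(↥(t.1.1)) < κ' := fun t => t.1.2
  choose Tt hTt hcofTt using fun t : T' => H₁ ↥(t.1.1) (hmem t)
  -- push each member of Tt down to a subset of A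
  have himg : ∀ (t : T') (u : {s : Set ↥(t.1.1) // #s < κ}),
      #(↥(Subtype.val '' u.1)) < κ := by
    intro t u
    rw [Cardinal.mk_image_eq Subtype.val_injective]
    exact u.2
  let F : ∀ t : T', {s : Set ↥(t.1.1) // #s < κ} → {s : Set A // #s < κ} :=
    fun t u => ⟨Subtype.val '' u.1, himg t u⟩
  refine ⟨⋃ t : T', F t '' Tt t, ?_, ?_⟩
  · calc #(↥(⋃ t : T', F t '' Tt t)) ≤ #T' * ⨆ t : T', #(↥(F t '' Tt t)) :=
        Cardinal.mk_iUnion_le _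
      _ < κ'' := by
        rcases eq_or_ne #T' 0 with h0 | h0
        · rw [h0, zero_mul]
          exact hκ''.pos
        apply Cardinal.mul_lt_of_lt hκ''.aleph0_le hT'
        refine lt_of_le_of_lt (ciSup_le' fun t => ?_) hlt₂
        exact le_of_lt ((Cardinal.mk_image_le).trans_lt (hTt t))
  · intro s
    have hs' : #(↥s.1) < κ' := s.2.trans hlt₁
    obtain ⟨t, htT, hst⟩ := hcof' ⟨s.1, hs'⟩
    -- pull s back into t
    have hpre : #(↥(Subtype.val ⁻¹' s.1 : Set ↥(t.1))) < κ :=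
      (Cardinal.mk_preimage_of_injective _ _ Subtype.val_injective).trans_lt s.2
    obtain ⟨u, huT, hsu⟩ := hcofTt ⟨t, htT⟩ ⟨Subtype.val ⁻¹' s.1, hpre⟩
    refine ⟨F ⟨t, htT⟩ u, Set.mem_iUnion.2 ⟨⟨t, htT⟩, Set.mem_image_of_mem _ huT⟩, ?_⟩
    intro a ha
    exact ⟨⟨a, hst ha⟩, hsu ha, rfl⟩
end

section
/- If κ ≤ λ are regular cardinals, then κ ◁ (λ^{<κ})⁺, where λ^{<κ} denotes the cardinality of [λ]^{<κ} and ⁺ denotes cardinal successor. -/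
/-!
Write `μ = #[λ]^{<κ}`. Since `κ` is regular, a family of fewer than `κ` sets in `[λ]^{<κ}` is
coded by the small subset `⋃ᵢ {i} × sᵢ` of `ν × λ`, so `μ ^ ν ≤ μ` for every `ν < κ`. Every
`s ∈ [A]^{<κ}` is the range of a map from some `J ∈ [λ]^{<κ}` (as `κ ≤ λ`), so for `#A ≤ μ` we
get `#[A]^{<κ} ≤ Σ_{J} μ ^ #J ≤ μ · μ = μ`. Hence `[A]^{<κ}` itself is a cofinal subset of
cardinality `< μ⁺`.
-/

universe u

open Cardinal

namespace Cardinal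

variable {κ : Cardinal.{u}}

theorem mk_setLt_mono {A B : Type u} (h : #A ≤ #B) :
    #{s : Set A // #s < κ} ≤ #{s : Set B // #s < κ} := by
  obtain ⟨f⟩ := h
  exact ⟨Function.Embedding.subtypeMap (Function.Embedding.image f)
    fun _ hs => (mk_image_eq f.injective).trans_lt hs⟩

theorem mk_le_mk_setLt (A : Type u) (hκ : 1 < κ) : #A ≤ #{s : Set A // #s < κ} :=
  mk_le_of_injective (f := fun x => ⟨{x}, (mk_singleton x).trans_lt hκ⟩) fun _ _ h =>
    Set.singleton_injective (congrArg Subtype.val h)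

theorem mk_pi_setLt_le (hκ : κ.IsRegular) {I A : Type u} (hI : #I < κ) :
    #(I → {s : Set A // #s < κ}) ≤ #{s : Set (I × A) // #s < κ} := by
  refine mk_le_of_injective (f := fun f => ⟨⋃ i, {i} ×ˢ (f i).1, ?_⟩) ?_
  · rw [card_iUnion_lt_iff_forall_of_isRegular hκ hI]
    intro i
    rw [Set.singleton_prod, mk_image_eq (Prod.mk_right_injective i)]
    exact (f i).2
  · intro f g h
    funext i
    ext x
    simpa using Set.ext_iff.1 (congrArg Subtype.val h) (i, x)

theorem mk_setLt_le_sum {A K : Type u} (hK : κ ≤ #K) :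
    #{s : Set A // #s < κ} ≤ sum fun J : {J : Set K // #J < κ} => #A ^ #J.1 := by
  let F : (Σ J : {J : Set K // #J < κ}, J.1 → A) → {s : Set A // #s < κ} :=
    fun p => ⟨Set.range p.2, mk_range_le.trans_lt p.1.2⟩
  have hF : Function.Surjective F := by
    rintro ⟨s, hs⟩
    obtain ⟨e⟩ := hs.le.trans hK
    refine ⟨⟨⟨Set.range e, (mk_range_eq e e.injective).trans_lt hs⟩,
      fun j => ((Equiv.ofInjective e e.injective).symm j).1⟩, Subtype.ext ?_⟩
    change Set.range (Subtype.val ∘ (Equiv.ofInjective e e.injective).symm) = s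
    rw [Set.range_comp, Equiv.range_eq_univ, Set.image_univ, Subtype.range_coe]
  simpa only [mk_sigma, power_def] using mk_le_of_surjective hF

theorem power_mk_setLt_le (hκ : κ.IsRegular) {A : Type u} (hA : κ ≤ #A) {ν : Cardinal.{u}}
    (hν : ν < κ) : #{s : Set A // #s < κ} ^ ν ≤ #{s : Set A // #s < κ} := by
  rw [← mk_out ν, power_def]
  refine (mk_pi_setLt_le hκ (by rwa [mk_out])).trans (mk_setLt_mono ?_)
  rw [mk_prod, lift_id, lift_id, mk_out]
  calc ν * #A ≤ #A * #A := mul_le_mul_left (hν.le.trans hA) _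
    _ = #A := mul_eq_self (hκ.aleph0_le.trans hA)

theorem mk_setLt_le_of_le_mk_setLt (hκ : κ.IsRegular) {A B : Type u} (hB : κ ≤ #B)
    (hA : #A ≤ #{s : Set B // #s < κ}) : #{s : Set A // #s < κ} ≤ #{s : Set B // #s < κ} := by
  set μ := #{s : Set B // #s < κ}
  have hμ : ℵ₀ ≤ μ :=
    hκ.aleph0_le.trans (hB.trans (mk_le_mk_setLt B (one_lt_aleph0.trans_le hκ.aleph0_le)))
  calc #{s : Set A // #s < κ} ≤ sum fun J : {J : Set B // #J < κ} => #A ^ #J.1 :=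
        mk_setLt_le_sum hB
    _ ≤ sum fun _ : {J : Set B // #J < κ} => μ :=
        sum_le_sum _ _ fun J => (power_le_power_right hA).trans (power_mk_setLt_le hκ hB J.2)
    _ = μ * μ := sum_const' _ _
    _ = μ := mul_eq_self hμ

end Cardinal

theorem sharplyLess_succ_powerlt_general {κ lam : Cardinal.{u}}
    (hκ : κ.IsRegular) (hκlam : κ ≤ lam) :
    SharplyLess κ (Order.succ (#{s : Set lam.out // #s < κ})) := by
  have hκ_le : κ ≤ #lam.out := by rwa [mk_out]
  have hκμ : κ ≤ #{s : Set lam.out // #s < κ} :=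
    hκ_le.trans (mk_le_mk_setLt _ (one_lt_aleph0.trans_le hκ.aleph0_le))
  refine ⟨hκμ.trans_lt (Order.lt_succ _), fun A hA => ?_⟩
  refine ⟨Set.univ, ?_, fun s => ⟨s, Set.mem_univ _, subset_rfl⟩⟩
  rw [mk_univ, Order.lt_succ_iff]
  exact mk_setLt_le_of_le_mk_setLt hκ hκ_le (Order.lt_succ_iff.1 hA)

/-- If `κ ≤ lam` are regular cardinals then `κ ◁ (lam^{<κ})⁺`, where `lam^{<κ}` is the
cardinality of the set `[lam]^{<κ}` of subsets of (a set of cardinality) `lam` of cardinality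
less than `κ`, and `⁺` is cardinal successor. -/
theorem sharplyLess_succ_powerlt {κ lam : Cardinal.{u}}
    (hκ : κ.IsRegular) (hlam : lam.IsRegular) (hκlam : κ ≤ lam) :
    SharplyLess κ (Order.succ (#{s : Set lam.out // #s < κ})) :=
  sharplyLess_succ_powerlt_general hκ hκlam
end

section
/- For every regular cardinal κ, the class of regular cardinals κ' with κ ◁ κ' is unbounded in the ordinals, and is closed under suprema of sets of regular cardinals sharply greater than κ when those suprema are regular. -/
universe u

open Cardinal

/-- For every regular cardinal `κ`, the class of regular cardinals sharply greater than `κ`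
is unbounded, and is closed under suprema of nonempty bounded sets of regular cardinals
sharply greater than `κ` whenever the supremum is regular. -/
theorem sharplyGreater_unbounded_and_closed (κ : Cardinal.{u}) (hκ : κ.IsRegular) :
    (∀ c : Cardinal.{u}, ∃ κ' : Cardinal.{u}, c < κ' ∧ κ'.IsRegular ∧ SharplyLess κ κ') ∧
      (∀ S : Set Cardinal.{u}, S.Nonempty → BddAbove S →
        (∀ x ∈ S, x.IsRegular ∧ SharplyLess κ x) → (sSup S).IsRegular →
          SharplyLess κ (sSup S)) := by
  constructor
  · intro c
    set m := max c κ with hm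
    have hℵm : ℵ₀ ≤ m := le_trans hκ.aleph0_le (le_max_right _ _)
    set μ := (2 : Cardinal.{u}) ^ m with hμ
    have hmμ : m ≤ μ := (cantor m).le
    have hℵμ : ℵ₀ ≤ μ := hℵm.trans hmμ
    refine ⟨Order.succ μ, ?_, isRegular_succ hℵμ, ?_, ?_⟩
    · exact lt_of_le_of_lt ((le_max_left c κ).trans hmμ) (Order.lt_succ μ)
    · exact lt_of_le_of_lt ((le_max_right c κ).trans hmμ) (Order.lt_succ μ)
    · intro A hA
      have hAμ : #A ≤ μ := Order.lt_succ_iff.mp hA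
      refine ⟨Set.univ, ?_, fun s => ⟨s, Set.mem_univ s, subset_rfl⟩⟩
      rw [mk_univ]
      have h1 : #{s : Set A // #s < κ} ≤ #{s : Set A // #s ≤ κ} :=
        mk_le_mk_of_subset (fun s (hs : #s < κ) => hs.le)
      have h2 : #{s : Set A // #s ≤ κ} ≤ max #A ℵ₀ ^ κ := mk_bounded_set_le A κ
      have h3 : max #A ℵ₀ ≤ μ := max_le hAμ hℵμ
      have h4 : (max #A ℵ₀ : Cardinal) ^ κ ≤ μ ^ κ :=
        power_le_power_right h3
      have h5 : μ ^ κ = μ := by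
        rw [hμ, ← power_mul, mul_comm, mul_eq_max (hκ.aleph0_le) hℵm,
          max_eq_right (le_max_right c κ)]
      calc #{s : Set A // #s < κ} ≤ μ ^ κ := (h1.trans h2).trans h4
        _ = μ := h5
        _ < Order.succ μ := Order.lt_succ μ
  · intro S hne hbdd hS hreg
    obtain ⟨x, hx⟩ := hne
    refine ⟨lt_of_lt_of_le (hS x hx).2.1 (le_csSup hbdd hx), ?_⟩
    intro A hA
    obtain ⟨y, hy, hAy⟩ : ∃ y ∈ S, #A < y := by
      by_contra h
      push_neg at h
      exact absurd (csSup_le ⟨x, hx⟩ h) (not_le.mpr hA)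
    obtain ⟨T, hT, hcof⟩ := (hS y hy).2.2 A hAy
    exact ⟨T, hT.trans_le (le_csSup hbdd hy), hcof⟩
end

section
/- Let j : V → M be an elementary embedding of the set-theoretic universe into a transitive inner model M, let D : I → Str(Σ) be a directed diagram of Σ-structures with colimit (direct limit) maps δ_i : D(i) → C, and suppose i₀ is an upper bound in j(I) for the pointwise image j``I. Then the maps j(δ)(j(i)) ∘ (j ↾ D(i)) followed by the transition maps of j(D) into j(D)(i₀) form a cocone over D, and the unique induced homomorphism h : C → j(D)(i₀) satisfies j(δ)(i₀) ∘ h = j ↾ C. -/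
universe u v w

open FirstOrder

/-- Abstract formulation of Step 3(ii) of Brooke-Taylor–Rosický: given a directed diagram `D`
of `Σ`-structures with colimit cocone `δ : D ⟶ C` (expressed by its universal property), and
the data coming from an elementary embedding `j : V → M` — namely the diagram `j(D) = D'` over
`j(I) = I'` with transition maps `t'` and colimit maps `δ'` into `j(C) = C'`, the monotone map
`jI : I → I'` (the action of `j` on indices), the `Σ`-homomorphisms `jD i = j ↾ D(i)` commuting
with the transition maps, the homomorphism `jC = j ↾ C` compatible with the cocones, and an
upper bound `i₀ ∈ j(I)` of the pointwise image `j``I` — the maps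
`ν i = t' (jI i) i₀ ∘ (j ↾ D(i))` form a cocone over `D`, and the unique induced homomorphism
`h : C → D'(i₀)` satisfies `δ' i₀ ∘ h = j ↾ C`. -/
theorem elementary_embedding_cocone_factorization
    {L : FirstOrder.Language.{u, v}} {I : Type w} {I' : Type w} [Preorder I] [Preorder I']
    (D : I → Type w) [∀ i, L.Structure (D i)]
    (t : ∀ i j, i ≤ j → (D i →[L] D j))
    (ht : ∀ i j k (hij : i ≤ j) (hjk : j ≤ k),
      (t j k hjk).comp (t i j hij) = t i k (hij.trans hjk))
    (C : Type w) [L.Structure C] (δ : ∀ i, D i →[L] C)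
    (hδ : ∀ i j (hij : i ≤ j), (δ j).comp (t i j hij) = δ i)
    -- `C` together with `δ` is the colimit (direct limit) of `D` in `Str Σ`:
    (huniv : ∀ (X : Type w) [L.Structure X] (c : ∀ i, D i →[L] X),
      (∀ i j (hij : i ≤ j), (c j).comp (t i j hij) = c i) →
      ∃! h : C →[L] X, ∀ i, h.comp (δ i) = c i)
    -- the diagram `j(D)` over `j(I)` inside `M`, with colimit `j(C)`:
    (D' : I' → Type w) [∀ i', L.Structure (D' i')]
    (t' : ∀ i' j', i' ≤ j' → (D' i' →[L] D' j'))
    (ht' : ∀ i' j' k' (h₁ : i' ≤ j') (h₂ : j' ≤ k'),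
      (t' j' k' h₂).comp (t' i' j' h₁) = t' i' k' (h₁.trans h₂))
    (C' : Type w) [L.Structure C'] (δ' : ∀ i', D' i' →[L] C')
    (hδ' : ∀ i' j' (h : i' ≤ j'), (δ' j').comp (t' i' j' h) = δ' i')
    -- the action of the elementary embedding `j`:
    (jI : I → I') (hjI : ∀ {i j : I}, i ≤ j → jI i ≤ jI j)
    (jD : ∀ i, D i →[L] D' (jI i))
    (hjD : ∀ i j (hij : i ≤ j),
      (jD j).comp (t i j hij) = (t' (jI i) (jI j) (hjI hij)).comp (jD i))
    (jC : C →[L] C')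
    (hjC : ∀ i, jC.comp (δ i) = (δ' (jI i)).comp (jD i))
    -- `i₀` is an upper bound in `j(I)` of the pointwise image `j``I`:
    (i₀ : I') (hub : ∀ i, jI i ≤ i₀) :
    (∀ i j (hij : i ≤ j),
      ((t' (jI j) i₀ (hub j)).comp (jD j)).comp (t i j hij) =
        (t' (jI i) i₀ (hub i)).comp (jD i)) ∧
    (∃! h : C →[L] D' i₀,
      ∀ i, h.comp (δ i) = (t' (jI i) i₀ (hub i)).comp (jD i)) ∧
    (∀ h : C →[L] D' i₀,
      (∀ i, h.comp (δ i) = (t' (jI i) i₀ (hub i)).comp (jD i)) →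
        (δ' i₀).comp h = jC) := by
  have hcone : ∀ i j (hij : i ≤ j),
      ((t' (jI j) i₀ (hub j)).comp (jD j)).comp (t i j hij) =
        (t' (jI i) i₀ (hub i)).comp (jD i) := by
    intro i j hij
    rw [Language.Hom.comp_assoc, hjD, ← Language.Hom.comp_assoc, ht']
  refine ⟨hcone, huniv _ _ hcone, ?_⟩
  intro h hh
  have hcone' : ∀ i j (hij : i ≤ j),
      ((δ' (jI j)).comp (jD j)).comp (t i j hij) = (δ' (jI i)).comp (jD i) := by
    intro i j hij
    rw [Language.Hom.comp_assoc, hjD, ← Language.Hom.comp_assoc, hδ']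
  obtain ⟨g, -, hg⟩ := huniv C' _ hcone'
  have h1 : (δ' i₀).comp h = g := by
    apply hg
    intro i
    rw [Language.Hom.comp_assoc, hh i, ← Language.Hom.comp_assoc, hδ']
  have h2 : jC = g := hg _ hjC
  rw [h1, h2]
end

section
/- For regular cardinals λ ≤ β, one has λ ◁ (2^β)⁺; and if β ≤ λ then the least cardinal γ ≥ β with λ ⊴ γ equals λ. -/
universe u

open Cardinal

/-- `κ ⊴ κ'` iff `κ = κ'` or `κ ◁ κ'`. -/
def SharplyLessEq (κ κ' : Cardinal.{u}) : Prop :=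
  κ = κ' ∨ SharplyLess κ κ'

/-- For regular cardinals `lam ≤ β` one has `lam ◁ (2^β)⁺`; and if `β ≤ lam` then the least
cardinal `γ ≥ β` with `lam ⊴ γ` equals `lam`. -/
theorem sharplyLess_succ_two_pow_and_least {lam β : Cardinal.{u}}
    (hlam : lam.IsRegular) (hβ : β.IsRegular) :
    (lam ≤ β → SharplyLess lam (Order.succ (2 ^ β))) ∧
      (β ≤ lam → sInf {γ : Cardinal.{u} | β ≤ γ ∧ SharplyLessEq lam γ} = lam) := by
  constructor
  · intro hlb
    have hβ0 : ℵ₀ ≤ β := hβ.aleph0_le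
    have h2β : ℵ₀ ≤ 2 ^ β := by
      calc ℵ₀ ≤ β := hβ0
      _ ≤ 2 ^ β := le_of_lt (cantor β)
    constructor
    · exact lt_of_le_of_lt (hlb.trans (le_of_lt (cantor β))) (Order.lt_succ _)
    · intro A hA
      have hA' : #A ≤ 2 ^ β := Order.lt_succ_iff.mp hA
      refine ⟨Set.univ, ?_, fun s => ⟨s, Set.mem_univ s, subset_rfl⟩⟩
      rw [Order.lt_succ_iff]
      calc #(Set.univ : Set {s : Set A // #s < lam})
          = #{s : Set A // #s < lam} := mk_univ
        _ ≤ #{t : Set A // #t ≤ β} := by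
            refine mk_le_of_injective (f := fun s =>
              (⟨s.1, le_of_lt (lt_of_lt_of_le s.2 hlb)⟩ : {t : Set A // #t ≤ β})) ?_
            intro s t h
            exact Subtype.ext (Subtype.mk.inj h)
        _ ≤ max #A ℵ₀ ^ β := mk_bounded_set_le A β
        _ ≤ (2 ^ β) ^ β := by
            apply power_le_power_right
            exact max_le hA' h2β
        _ = 2 ^ (β * β) := by rw [← power_mul]
        _ = 2 ^ β := by rw [mul_eq_self hβ0]
  · intro hbl
    apply le_antisymm
    · exact csInf_le' ⟨hbl, Or.inl rfl⟩
    · refine le_csInf ⟨lam, ⟨hbl, Or.inl rfl⟩⟩ ?_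
      rintro γ ⟨-, hγ | hγ⟩
      · exact hγ.le
      · exact hγ.1.le
end
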